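/- Let σ > 0, k > 1, and let Φ_k(r) = r^k. Define for x, y ∈ ℝ² and t ∈ ℝ, S_t = diag(σ^t, σ^{−t}), and g(t) = Φ_k(|S_t x − S_t y|) for fixed x ≠ y. Then g is twice differentiable and g''(t) ≥ 0 for all t, i.e., t ↦ |S_t x − S_t y|^k is convex. -/

import Mathlib

/-!
With `a = x - y` and `c = 2 log σ`, the function is `u ^ (k / 2)` for
`u t = a₁² e^{ct} + a₂² e^{-ct}`. This `u` is positive and log-convex, since
`u u'' - u'² = 4 c² a₁² a₂² ≥ 0`, and `(u ^ p)'' = p u^(p-2) (p u'² + (u u'' - u'²))`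
is nonnegative for every positive log-convex `u` and every `p ≥ 0`.
-/

open Real

section PowerOfLogConvex

variable {u u' u'' : ℝ → ℝ} {p : ℝ}

theorem iteratedDeriv_two_rpow_eq (hu : ∀ t, 0 < u t) (hu' : ∀ t, HasDerivAt u (u' t) t)
    (hu'' : ∀ t, HasDerivAt u' (u'' t) t) (t : ℝ) :
    iteratedDeriv 2 (fun s => u s ^ p) t
      = p * u t ^ (p - 2) * (p * u' t ^ 2 + (u t * u'' t - u' t ^ 2)) := by
  have hderiv : deriv (fun s => u s ^ p) = fun s => p * u s ^ (p - 1) * u' s :=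
    funext fun s => ((hu' s).rpow_const (Or.inl (hu s).ne')).deriv.trans (by ring)
  have hderiv2 : HasDerivAt (fun s => p * u s ^ (p - 1) * u' s)
      (p * (u' t * (p - 1) * u t ^ (p - 1 - 1)) * u' t + p * u t ^ (p - 1) * u'' t) t :=
    (((hu' t).rpow_const (Or.inl (hu t).ne')).const_mul p).mul (hu'' t)
  rw [iteratedDeriv_succ, iteratedDeriv_one, hderiv, hderiv2.deriv,
    show p - 1 = p - 2 + 1 by ring, rpow_add_one (hu t).ne', show p - 2 + 1 - 1 = p - 2 by ring]
  ring

theorem iteratedDeriv_two_rpow_nonneg (hp : 0 ≤ p) (hu : ∀ t, 0 < u t)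
    (hu' : ∀ t, HasDerivAt u (u' t) t) (hu'' : ∀ t, HasDerivAt u' (u'' t) t)
    (hlog : ∀ t, u' t ^ 2 ≤ u t * u'' t) (t : ℝ) :
    0 ≤ iteratedDeriv 2 (fun s => u s ^ p) t := by
  rw [iteratedDeriv_two_rpow_eq hu hu' hu'' t]
  have := rpow_pos_of_pos (hu t) (p - 2)
  have := sub_nonneg.2 (hlog t)
  positivity

end PowerOfLogConvex

noncomputable def expComb (α β c t : ℝ) : ℝ := α * exp (c * t) + β * exp (-(c * t))

section ExpComb

variable (α β c : ℝ)

theorem contDiff_expComb {n : WithTop ℕ∞} : ContDiff ℝ n (expComb α β c) := by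
  unfold expComb
  fun_prop

theorem hasDerivAt_expComb (t : ℝ) :
    HasDerivAt (expComb α β c) (expComb (c * α) (-(c * β)) c t) t := by
  have hlin : HasDerivAt (fun s => c * s) c t := by simpa using (hasDerivAt_id t).const_mul c
  have hneg : HasDerivAt (fun s => -(c * s)) (-c) t := hlin.neg
  exact ((hlin.exp.const_mul α).add (hneg.exp.const_mul β)).congr_deriv (by rw [expComb]; ring)

variable {α β}

theorem expComb_pos (hα : 0 ≤ α) (hβ : 0 ≤ β) (hαβ : 0 < α ∨ 0 < β) (t : ℝ) :
    0 < expComb α β c t := by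
  unfold expComb
  rcases hαβ with hα | hβ <;> positivity

theorem sq_expComb_deriv_le (hα : 0 ≤ α) (hβ : 0 ≤ β) (t : ℝ) :
    expComb (c * α) (-(c * β)) c t ^ 2
      ≤ expComb α β c t * expComb (c * (c * α)) (-(c * -(c * β))) c t := by
  have hαβ : 0 ≤ α * exp (c * t) * (β * exp (-(c * t))) := by positivity
  simp only [expComb]
  nlinarith [mul_nonneg (sq_nonneg c) hαβ]

end ExpComb

theorem sqrt_deformed_dist_rpow_eq {σ : ℝ} (hσ : 0 < σ) (k a b t : ℝ) :
    sqrt ((σ ^ t * a) ^ 2 + (σ ^ (-t) * b) ^ 2) ^ k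
      = expComb (a ^ 2) (b ^ 2) (2 * log σ) t ^ (k / 2) := by
  have hsq : ∀ s : ℝ, (σ ^ s) ^ 2 = exp (2 * log σ * s) := fun s => by
    rw [rpow_def_of_pos hσ, sq, ← exp_add]
    ring_nf
  have hu : (σ ^ t * a) ^ 2 + (σ ^ (-t) * b) ^ 2 = expComb (a ^ 2) (b ^ 2) (2 * log σ) t := by
    rw [mul_pow, mul_pow, hsq, hsq, expComb]
    ring_nf
  rw [sqrt_eq_rpow, ← rpow_mul (by positivity), hu, one_div_mul_eq_div]

theorem power_of_deformed_distance_convex (σ k : ℝ) (hσ : 0 < σ) (hk : 1 < k)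
    (x y : ℝ × ℝ) (hxy : x ≠ y) :
    ContDiff ℝ 2 (fun t : ℝ =>
        (Real.sqrt ((σ ^ t * (x.1 - y.1)) ^ 2 + (σ ^ (-t) * (x.2 - y.2)) ^ 2)) ^ k) ∧
    ∀ t : ℝ, 0 ≤ iteratedDeriv 2 (fun t : ℝ =>
        (Real.sqrt ((σ ^ t * (x.1 - y.1)) ^ 2 + (σ ^ (-t) * (x.2 - y.2)) ^ 2)) ^ k) t := by
  have hsq : 0 < (x.1 - y.1) ^ 2 ∨ 0 < (x.2 - y.2) ^ 2 := by
    simpa only [sq_pos_iff, sub_ne_zero, Ne, Prod.ext_iff, not_and_or] using hxy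
  have hu := expComb_pos (2 * log σ) (sq_nonneg _) (sq_nonneg _) hsq
  simp only [sqrt_deformed_dist_rpow_eq hσ]
  exact ⟨(contDiff_expComb _ _ _).rpow_const_of_ne fun t => (hu t).ne',
    iteratedDeriv_two_rpow_nonneg (by linarith) hu (hasDerivAt_expComb _ _ _)
      (hasDerivAt_expComb _ _ _) (sq_expComb_deriv_le _ (sq_nonneg _) (sq_nonneg _))⟩
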